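/- arXiv:1304.0272 — 2 statements merged into one kernel-verified Lean document; each statement's English description precedes it below -/
import Mathlib

section
/- Tertium non datur does not imply ex falso over minimal logic: there is no derivation in minimal propositional logic of ¬A → (A → B) (for some fixed distinct atoms A, B) from the set of all instances of the excluded-middle schema C ∨ ¬C. -/
/-- Formulas of minimal propositional logic. `⊥` is a distinguished
atom (constructor `bot`) with no special rules. -/
inductive PF : Type
  | atom : ℕ → PF
  | bot : PF
  | and : PF → PF → PF
  | or : PF → PF → PF
  | imp : PF → PF → PF

/-- Negation is defined: ¬A := A → ⊥. -/
def PF.neg (A : PF) : PF := A.imp .bot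

/-- Derivability in minimal propositional logic (a standard Hilbert-style
axiomatization of positive/minimal logic, equivalent to intuitionistic
natural deduction without ex falso) from a set `H` of extra hypotheses. -/
inductive MPC (H : Set PF) : PF → Prop
  | hyp {A : PF} : A ∈ H → MPC H A
  | ax_k {A B : PF} : MPC H (A.imp (B.imp A))
  | ax_s {A B C : PF} : MPC H ((A.imp (B.imp C)).imp ((A.imp B).imp (A.imp C)))
  | and_intro {A B : PF} : MPC H (A.imp (B.imp (A.and B)))
  | and_left {A B : PF} : MPC H ((A.and B).imp A)
  | and_right {A B : PF} : MPC H ((A.and B).imp B)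
  | or_inl {A B : PF} : MPC H (A.imp (A.or B))
  | or_inr {A B : PF} : MPC H (B.imp (A.or B))
  | or_elim {A B C : PF} : MPC H ((A.imp C).imp ((B.imp C).imp ((A.or B).imp C)))
  | mp {A B : PF} : MPC H (A.imp B) → MPC H A → MPC H B

/-- All instances of double negation elimination ¬¬A → A. -/
def DNE : Set PF := {F | ∃ A : PF, F = (A.neg.neg).imp A}

/-- All instances of ex falso quodlibet ¬A → (A → B). -/
def EFQ : Set PF := {F | ∃ A B : PF, F = (A.neg).imp (A.imp B)}

/-- All instances of tertium non datur A ∨ ¬A. -/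
def TND : Set PF := {F | ∃ A : PF, F = A.or A.neg}

/-- Valuation with ⊥ interpreted as a given truth value. -/
def PF.eval (v : ℕ → Prop) : PF → Prop
  | .atom n => v n
  | .bot => True
  | .and A B => A.eval v ∧ B.eval v
  | .or A B => A.eval v ∨ B.eval v
  | .imp A B => A.eval v → B.eval v

open Classical in
lemma MPC.sound {H : Set PF} {F : PF} (v : ℕ → Prop)
    (hH : ∀ G ∈ H, G.eval v) (h : MPC H F) : F.eval v := by
  induction h with
  | hyp hA => exact hH _ hA
  | mp _ _ ih1 ih2 => exact ih1 ih2
  | or_elim => intro f g x; rcases x with x | x; exacts [f x, g x]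
  | _ => first
    | (intro x y; exact x)
    | (intro x y; exact y x)
    | (intro x y z; exact x z (y z))
    | (intro x y; exact ⟨x, y⟩)
    | (intro x; exact x.1)
    | (intro x; exact x.2)
    | (intro x; exact Or.inl x)
    | (intro x; exact Or.inr x)

/-- Tertium non datur does not imply ex falso over minimal
logic: for distinct atoms A, B, the formula ¬A → (A → B) is not derivable
from all instances of excluded middle. -/
theorem tnd_not_implies_efq (a b : ℕ) (hab : a ≠ b) :
    ¬ MPC TND (((PF.atom a).neg).imp ((PF.atom a).imp (PF.atom b))) := by
  intro h
  have := h.sound (v := fun n => n ≠ b) ?_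
  · exact this (fun _ => trivial) hab rfl
  · rintro G ⟨A, rfl⟩
    by_cases hA : A.eval (fun n => n ≠ b)
    · exact Or.inl hA
    · exact Or.inr fun x => absurd x hA
end

section
/- Tertium non datur does not imply double negation elimination over minimal logic: there is no derivation in minimal propositional logic of ¬¬A → A (for some fixed atom A) from the set of all instances of the excluded-middle schema C ∨ ¬C. -/
/-- Valuation with ⊥ true and atom `a` false. -/
def ev (a : ℕ) : PF → Prop
  | .atom n => n ≠ a
  | .bot => True
  | .and A B => ev a A ∧ ev a B
  | .or A B => ev a A ∨ ev a B
  | .imp A B => ev a A → ev a B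

lemma ev_sound {a : ℕ} {F : PF} (h : MPC TND F) : ev a F := by
  induction h with
  | hyp hm =>
    obtain ⟨A, rfl⟩ := hm
    simp [ev, PF.neg]
  | mp _ _ ih1 ih2 => exact ih1 ih2
  | or_elim => intro h1 h2 h3; cases h3 with
    | inl h => exact h1 h
    | inr h => exact h2 h
  | _ => simp only [ev]; tauto

/-- Tertium non datur does not imply double negation
elimination over minimal logic: for an atom A, ¬¬A → A is not derivable
from all instances of excluded middle. -/
theorem tnd_not_implies_dne (a : ℕ) :
    ¬ MPC TND (((PF.atom a).neg.neg).imp (PF.atom a)) := by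
  intro h
  have := ev_sound (a := a) h
  simp [ev, PF.neg] at this
end
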